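/- For all c1, c2, c3 ∈ ℝ, Q† · A(c1,c2,c3) · Q equals the diagonal matrix diag(e^{i(c1−c2+c3)/2}, e^{i(c1+c2−c3)/2}, e^{−i(c1+c2+c3)/2}, e^{i(−c1+c2+c3)/2}). -/

import Mathlib

open Matrix Complex

noncomputable section

/-- Pauli matrix σx. -/
def sigmaX : Matrix (Fin 2) (Fin 2) ℂ := !![0, 1; 1, 0]
/-- Pauli matrix σy. -/
def sigmaY : Matrix (Fin 2) (Fin 2) ℂ := !![0, -I; I, 0]
/-- Pauli matrix σz. -/
def sigmaZ : Matrix (Fin 2) (Fin 2) ℂ := !![1, 0; 0, -1]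

/-- Kronecker product of two 2×2 complex matrices, as a 4×4 matrix
(row-major ordering: entry ((2i+k),(2j+l)) is `A i j * B k l`). -/
def kron (A B : Matrix (Fin 2) (Fin 2) ℂ) : Matrix (Fin 4) (Fin 4) ℂ :=
  Matrix.of fun i j =>
    A ⟨i.val / 2, by have := i.isLt; omega⟩ ⟨j.val / 2, by have := j.isLt; omega⟩ *
    B ⟨i.val % 2, by have := i.isLt; omega⟩ ⟨j.val % 2, by have := j.isLt; omega⟩

/-- The gate A(c1,c2,c3) = exp((i/2)(c1 σx⊗σx + c2 σy⊗σy + c3 σz⊗σz)). -/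
def Agate (c1 c2 c3 : ℝ) : Matrix (Fin 4) (Fin 4) ℂ :=
  NormedSpace.exp ((I / 2) •
    ((c1 : ℂ) • kron sigmaX sigmaX + (c2 : ℂ) • kron sigmaY sigmaY +
      (c3 : ℂ) • kron sigmaZ sigmaZ))

/-- The transformation from the computational basis to the Bell basis. -/
def Qmat : Matrix (Fin 4) (Fin 4) ℂ :=
  (((Real.sqrt 2 : ℝ) : ℂ))⁻¹ • !![1, 0, 0, I; 0, I, 1, 0; 0, I, -1, 0; 1, 0, 0, -I]

-- auxiliary
def Nmat : Matrix (Fin 4) (Fin 4) ℂ := !![1, 0, 0, I; 0, I, 1, 0; 0, I, -1, 0; 1, 0, 0, -I]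

lemma kronXX : kron sigmaX sigmaX = !![0,0,0,1;0,0,1,0;0,1,0,0;1,0,0,0] := by
  ext i j; fin_cases i <;> fin_cases j <;>
    simp [kron, sigmaX, show ((2:Fin 4):ℕ)=2 from rfl, show ((3:Fin 4):ℕ)=3 from rfl,
      Fin.mk_zero, Fin.mk_one, Matrix.vecHead, Matrix.vecTail, Function.comp]

lemma kronYY : kron sigmaY sigmaY = !![0,0,0,-1;0,0,1,0;0,1,0,0;-1,0,0,0] := by
  ext i j; fin_cases i <;> fin_cases j <;>
    simp [kron, sigmaY, show ((2:Fin 4):ℕ)=2 from rfl, show ((3:Fin 4):ℕ)=3 from rfl,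
      Fin.mk_zero, Fin.mk_one, Matrix.vecHead, Matrix.vecTail, Function.comp] <;>
    ring_nf <;> simp [Complex.I_sq]

lemma kronZZ : kron sigmaZ sigmaZ = !![1,0,0,0;0,-1,0,0;0,0,-1,0;0,0,0,1] := by
  ext i j; fin_cases i <;> fin_cases j <;>
    simp [kron, sigmaZ, show ((2:Fin 4):ℕ)=2 from rfl, show ((3:Fin 4):ℕ)=3 from rfl,
      Fin.mk_zero, Fin.mk_one, Matrix.vecHead, Matrix.vecTail, Function.comp]

set_option maxHeartbeats 1000000 in
lemma Mexplicit (c1 c2 c3 : ℝ) :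
    (I / 2) • ((c1 : ℂ) • kron sigmaX sigmaX + (c2 : ℂ) • kron sigmaY sigmaY +
      (c3 : ℂ) • kron sigmaZ sigmaZ) =
    !![I*c3/2, 0, 0, I*(c1-c2)/2;
       0, -(I*c3/2), I*(c1+c2)/2, 0;
       0, I*(c1+c2)/2, -(I*c3/2), 0;
       I*(c1-c2)/2, 0, 0, I*c3/2] := by
  rw [kronXX, kronYY, kronZZ]
  ext i j; fin_cases i <;> fin_cases j <;>
    simp [Matrix.smul_apply, Matrix.add_apply, Matrix.vecHead, Matrix.vecTail,
      Function.comp] <;> ring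

def dvec (c1 c2 c3 : ℝ) : Fin 4 → ℂ :=
  ![I * ((c1 : ℂ) - c2 + c3) / 2, I * ((c1 : ℂ) + c2 - c3) / 2,
    -(I * ((c1 : ℂ) + c2 + c3) / 2), I * (-(c1 : ℂ) + c2 + c3) / 2]

lemma NHMN (c1 c2 c3 : ℝ) :
    Nmatᴴ * !![I*c3/2, 0, 0, I*(c1-c2)/2;
       0, -(I*c3/2), I*(c1+c2)/2, 0;
       0, I*(c1+c2)/2, -(I*c3/2), 0;
       I*(c1-c2)/2, 0, 0, I*c3/2] * Nmat = (2:ℂ) • Matrix.diagonal (dvec c1 c2 c3) := by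
  ext i j; fin_cases i <;> fin_cases j <;>
    simp [Nmat, dvec, Matrix.mul_apply, Fin.sum_univ_four, Matrix.diagonal,
      Matrix.vecHead, Matrix.vecTail, Function.comp, Complex.conj_I] <;>
    ring_nf <;> simp [Complex.I_sq, show (I:ℂ)^3 = -I by rw [pow_succ, Complex.I_sq]; ring] <;> ring_nf

lemma NHN : Nmatᴴ * Nmat = (2:ℂ) • 1 := by
  ext i j; fin_cases i <;> fin_cases j <;>
    simp [Nmat, Matrix.mul_apply, Fin.sum_univ_four, Matrix.one_apply,
      Matrix.vecHead, Matrix.vecTail, Function.comp, Complex.conj_I] <;>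
    ring_nf <;> simp [Complex.I_sq]

lemma NNH : Nmat * Nmatᴴ = (2:ℂ) • 1 := by
  ext i j; fin_cases i <;> fin_cases j <;>
    simp [Nmat, Matrix.mul_apply, Fin.sum_univ_four, Matrix.one_apply,
      Matrix.vecHead, Matrix.vecTail, Function.comp, Complex.conj_I] <;>
    ring_nf <;> simp [Complex.I_sq]

lemma s_mul_s : ((Real.sqrt 2 : ℝ) : ℂ) * ((Real.sqrt 2 : ℝ) : ℂ) = 2 := by
  rw [← Complex.ofReal_mul, Real.mul_self_sqrt (by norm_num)]
  norm_num

lemma s_ne : ((Real.sqrt 2 : ℝ) : ℂ) ≠ 0 := by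
  rw [Complex.ofReal_ne_zero]
  positivity

lemma QmatH : Qmatᴴ = (((Real.sqrt 2 : ℝ) : ℂ))⁻¹ • Nmatᴴ := by
  rw [Qmat, Matrix.conjTranspose_smul]
  congr 1
  simp [← Complex.ofReal_inv]

lemma QHQ : Qmatᴴ * Qmat = 1 := by
  rw [QmatH, Qmat]
  rw [Matrix.smul_mul, Matrix.mul_smul, ← Nmat]
  rw [NHN, smul_smul, smul_smul]
  rw [show (((Real.sqrt 2 : ℝ) : ℂ))⁻¹ * (((Real.sqrt 2 : ℝ) : ℂ))⁻¹ * 2 = 1 by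
    rw [← s_mul_s]; field_simp, one_smul]

lemma QQH : Qmat * Qmatᴴ = 1 := by
  rw [QmatH, Qmat]
  rw [Matrix.smul_mul, Matrix.mul_smul, ← Nmat]
  rw [NNH, smul_smul, smul_smul]
  rw [show (((Real.sqrt 2 : ℝ) : ℂ))⁻¹ * (((Real.sqrt 2 : ℝ) : ℂ))⁻¹ * 2 = 1 by
    rw [← s_mul_s]; field_simp, one_smul]

lemma key (c1 c2 c3 : ℝ) :
    Qmatᴴ * ((I / 2) • ((c1 : ℂ) • kron sigmaX sigmaX + (c2 : ℂ) • kron sigmaY sigmaY +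
      (c3 : ℂ) • kron sigmaZ sigmaZ)) * Qmat = Matrix.diagonal (dvec c1 c2 c3) := by
  rw [Mexplicit, QmatH]
  conv_lhs => rw [Qmat]
  rw [Matrix.smul_mul, Matrix.mul_smul, Matrix.smul_mul, ← Nmat, NHMN c1 c2 c3,
    smul_smul, smul_smul]
  rw [show (((Real.sqrt 2 : ℝ) : ℂ))⁻¹ * (((Real.sqrt 2 : ℝ) : ℂ))⁻¹ * 2 = 1 by
    rw [← s_mul_s]; field_simp, one_smul]

def Qunit : (Matrix (Fin 4) (Fin 4) ℂ)ˣ :=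
  ⟨Qmat, Qmatᴴ, QQH, QHQ⟩

/-- In the Bell basis, A(c1,c2,c3) is diagonal with the stated phases. -/
theorem bell_basis_diagonal (c1 c2 c3 : ℝ) :
    Qmatᴴ * Agate c1 c2 c3 * Qmat =
      Matrix.diagonal
        ![Complex.exp (I * ((c1 : ℂ) - c2 + c3) / 2),
          Complex.exp (I * ((c1 : ℂ) + c2 - c3) / 2),
          Complex.exp (-(I * ((c1 : ℂ) + c2 + c3) / 2)),
          Complex.exp (I * (-(c1 : ℂ) + c2 + c3) / 2)] := by
  have hinv : (↑(Qunit⁻¹) : Matrix (Fin 4) (Fin 4) ℂ) = Qmatᴴ := rfl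
  have hu : (↑Qunit : Matrix (Fin 4) (Fin 4) ℂ) = Qmat := rfl
  have h := Matrix.exp_units_conj' Qunit
    ((I / 2) • ((c1 : ℂ) • kron sigmaX sigmaX + (c2 : ℂ) • kron sigmaY sigmaY +
      (c3 : ℂ) • kron sigmaZ sigmaZ))
  rw [hinv, hu] at h
  rw [Agate, ← h, key, Matrix.exp_diagonal]
  have hd : NormedSpace.exp (dvec c1 c2 c3) =
      ![Complex.exp (I * ((c1 : ℂ) - c2 + c3) / 2),
        Complex.exp (I * ((c1 : ℂ) + c2 - c3) / 2),
        Complex.exp (-(I * ((c1 : ℂ) + c2 + c3) / 2)),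
        Complex.exp (I * (-(c1 : ℂ) + c2 + c3) / 2)] := by
    funext i
    fin_cases i <;> simp [dvec, ← Complex.exp_eq_exp_ℂ]
  rw [hd]

end
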